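/- Fix μ ∈ ℝ and c > μ. The function g(σ) = φ((c−μ)/σ)·σ − [1 − Φ((c−μ)/σ)]·(c−μ), defined for σ > 0, is strictly increasing in σ. -/

import Mathlib

open MeasureTheory Real Set ProbabilityTheory

noncomputable def phi (t : ℝ) : ℝ := Real.exp (-t^2/2) / Real.sqrt (2*Real.pi)
noncomputable def Phi (t : ℝ) : ℝ := ∫ u in Set.Iic t, phi u

/- The derivative of `g` is `φ((c - μ)/σ) > 0`: differentiating `φ(a/σ) σ` with `φ'(t) = -t φ(t)`
gives `φ(a/σ) + (a/σ)² φ(a/σ)`, and the second term is cancelled exactly by the derivative of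
`-(1 - Φ(a/σ)) a`. -/

lemma phi_pos (t : ℝ) : 0 < phi t :=
  div_pos (exp_pos _) (sqrt_pos.mpr (by positivity))

lemma continuous_phi : Continuous phi := by
  unfold phi
  fun_prop

lemma integrable_phi : Integrable phi := by
  refine ((integrable_exp_neg_mul_sq (b := 1 / 2) (by norm_num)).div_const
    (sqrt (2 * π))).congr (Filter.Eventually.of_forall fun u => ?_)
  simp only [phi]
  ring_nf

lemma hasDerivAt_phi (t : ℝ) : HasDerivAt phi (-t * phi t) t := by
  have hexponent : HasDerivAt (fun t : ℝ => -t ^ 2 / 2) (-t) t :=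
    ((hasDerivAt_pow 2 t).neg.div_const 2).congr_deriv (by ring)
  unfold phi
  exact (hexponent.exp.div_const _).congr_deriv (by ring)

lemma hasDerivAt_integral_Iic {f : ℝ → ℝ} (hf : Continuous f) (hfi : Integrable f) (t : ℝ) :
    HasDerivAt (fun t => ∫ u in Iic t, f u) (f t) t := by
  have hsplit :
      (fun t => ∫ u in Iic t, f u) = fun t => (∫ u in Iic 0, f u) + ∫ u in 0..t, f u := by
    funext s
    rw [← intervalIntegral.integral_Iic_sub_Iic hfi.integrableOn hfi.integrableOn]
    ring
  rw [hsplit]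
  exact ((hf.integral_hasStrictDerivAt 0 t).hasDerivAt).const_add _

lemma hasDerivAt_Phi (t : ℝ) : HasDerivAt Phi (phi t) t :=
  hasDerivAt_integral_Iic continuous_phi integrable_phi t

lemma hasDerivAt_phi_div_mul_sub_one_sub_Phi_div_mul (a : ℝ) {σ : ℝ} (hσ : σ ≠ 0) :
    HasDerivAt (fun σ : ℝ => phi (a / σ) * σ - (1 - Phi (a / σ)) * a) (phi (a / σ)) σ := by
  have hquot : HasDerivAt (fun σ : ℝ => a / σ) (-a / σ ^ 2) σ := by
    simpa [div_eq_mul_inv] using (hasDerivAt_inv hσ).const_mul a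
  have hfirst := ((hasDerivAt_phi (a / σ)).comp σ hquot).mul (hasDerivAt_id σ)
  have hsecond := (((hasDerivAt_Phi (a / σ)).comp σ hquot).const_sub 1).mul_const a
  refine (hfirst.sub hsecond).congr_deriv ?_
  simp only [Function.comp_apply, id]
  field_simp
  ring

theorem stmt7_general (μ c : ℝ) :
    StrictMonoOn (fun σ : ℝ => phi ((c-μ)/σ) * σ - (1 - Phi ((c-μ)/σ)) * (c-μ))
      (Set.Ioi 0) := by
  have hderiv : ∀ σ ∈ Ioi (0 : ℝ), HasDerivAt
      (fun σ : ℝ => phi ((c-μ)/σ) * σ - (1 - Phi ((c-μ)/σ)) * (c-μ)) (phi ((c-μ)/σ)) σ :=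
    fun σ hσ => hasDerivAt_phi_div_mul_sub_one_sub_Phi_div_mul (c - μ) (ne_of_gt hσ)
  exact strictMonoOn_of_hasDerivWithinAt_pos (convex_Ioi 0)
    (fun σ hσ => (hderiv σ hσ).continuousAt.continuousWithinAt)
    (fun σ hσ => (hderiv σ (interior_subset hσ)).hasDerivWithinAt) (fun σ _ => phi_pos _)

theorem stmt7 (μ c : ℝ) (hc : μ < c) :
    StrictMonoOn (fun σ : ℝ => phi ((c-μ)/σ) * σ - (1 - Phi ((c-μ)/σ)) * (c-μ))
      (Set.Ioi 0) :=
  stmt7_general μ c
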